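/- arXiv:1405.6443 — 3 statements merged into one kernel-verified Lean document; each statement's English description precedes it below -/
import Mathlib

section
/- If the Grover walk on a finite connected graph G is periodic, then every eigenvalue of the transition matrix P = D^{-1}A is of the form cos(2πq) for some rational number q; in particular every eigenvalue of P is an algebraic number whose value 2cos(2πq) is an algebraic integer. -/
open Matrix Complex

variable {V : Type*} [Fintype V] [DecidableEq V]

instance (G : SimpleGraph V) : DecidableEq G.Dart :=
  fun a b => decidable_of_iff _ (SimpleGraph.Dart.ext_iff a b).symm

/-- The flip-flop shift on the arc (dart) space. -/
noncomputable def groverShift (G : SimpleGraph V) [DecidableRel G.Adj] :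
    Matrix G.Dart G.Dart ℂ :=
  fun a b => if b = a.symm then 1 else 0

/-- The Grover coin, acting blockwise on arcs grouped by tail vertex:
the block at a vertex `v` of degree `d` is `2/d J - I`. -/
noncomputable def groverCoin (G : SimpleGraph V) [DecidableRel G.Adj] :
    Matrix G.Dart G.Dart ℂ :=
  fun a b => (if a.toProd.1 = b.toProd.1 then (2 : ℂ) / (G.degree a.toProd.1) else 0)
    - (if a = b then 1 else 0)

/-- The Grover walk time-evolution operator `U = S C`. -/
noncomputable def groverU (G : SimpleGraph V) [DecidableRel G.Adj] :
    Matrix G.Dart G.Dart ℂ := groverShift G * groverCoin G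

/-- The transition matrix `P = D⁻¹ A` of the simple random walk, over `ℂ`. -/
noncomputable def transMat (G : SimpleGraph V) [DecidableRel G.Adj] :
    Matrix V V ℂ :=
  fun u v => if G.Adj u v then (1 : ℂ) / (G.degree u) else 0

/-- The boundary map `d : ℂ^V → ℂ^A`, `(dφ)(a) = φ(t(a))/√(deg t(a))`. -/
noncomputable def boundaryMap (G : SimpleGraph V) [DecidableRel G.Adj]
    (φ : V → ℂ) : G.Dart → ℂ :=
  fun a => φ a.toProd.2 / (Real.sqrt (G.degree a.toProd.2) : ℝ)

/-! Let `x` be an eigenvector of `P` for `μ` and let `c` be a root of `X² - 2μX + 1`. The arc vector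
`a ↦ c x(t a) - x(o a)` is then an eigenvector of `U` for `c`, nonzero as soon as `c² ≠ 1` and `x`
does not vanish at some non-isolated vertex; if `x` does not vanish at an isolated vertex then
`μ = 0` and `c⁴ = 1`. So periodicity of `U` makes `c` a root of unity; hence `|c| = 1`, `μ = (c + c⁻¹)/2 = Re c = cos (2πm/n)`, and
`2μ = 2 cos ((2m/n)π)` is an algebraic integer. -/

theorem Matrix.pow_mulVec_of_mulVec_eq_smul {n R : Type*} [Fintype n] [DecidableEq n]
    [CommSemiring R] {M : Matrix n n R} {v : n → R} {c : R} (h : M *ᵥ v = c • v) (k : ℕ) :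
    (M ^ k) *ᵥ v = c ^ k • v := by
  induction k with
  | zero => simp
  | succ k ih => rw [pow_succ', ← mulVec_mulVec, ih, mulVec_smul, h, smul_smul, pow_succ]

theorem Matrix.pow_eq_one_of_mulVec_eq_smul {n K : Type*} [Fintype n] [DecidableEq n] [Field K]
    {M : Matrix n n K} {v : n → K} {c : K} {k : ℕ} (hM : M ^ k = 1) (hv : v ≠ 0)
    (h : M *ᵥ v = c • v) : c ^ k = 1 := by
  refine smul_left_injective K hv (?_ : c ^ k • v = (1 : K) • v)
  rw [← pow_mulVec_of_mulVec_eq_smul h, hM, one_mulVec, one_smul]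

theorem Complex.re_eq_of_norm_eq_one_of_quadratic {z : ℂ} {μ : ℝ} (hz : ‖z‖ = 1)
    (hquad : z ^ 2 - 2 * μ * z + 1 = 0) : z.re = μ := by
  have hconj : z * (starRingEnd ℂ) z = 1 := by
    rw [mul_conj, normSq_eq_norm_sq, hz]; norm_num
  have hsum : z + (starRingEnd ℂ) z = 2 * μ := by
    linear_combination (starRingEnd ℂ) z * hquad - (z - 2 * (μ : ℂ)) * hconj
  rw [add_conj] at hsum
  exact mul_left_cancel₀ two_ne_zero (mod_cast hsum)

theorem Complex.exists_rat_re_eq_cos_of_isOfFinOrder {z : ℂ} (hz : IsOfFinOrder z) :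
    ∃ q : ℚ, z.re = Real.cos (2 * Real.pi * q) := by
  obtain ⟨n, hn, hzn⟩ := isOfFinOrder_iff_pow_eq_one.mp hz
  have : NeZero n := ⟨hn.ne'⟩
  obtain ⟨i, -, rfl⟩ := (isPrimitiveRoot_exp n hn.ne').eq_pow_of_pow_eq_one hzn
  refine ⟨i / n, ?_⟩
  rw [← exp_nat_mul, show (i : ℂ) * (2 * Real.pi * I / n)
    = ((2 * Real.pi * (i / n : ℚ) : ℝ) : ℂ) * I by push_cast; ring, exp_ofReal_mul_I_re]

namespace SimpleGraph

theorem sum_dart_fst_eq {W M : Type*} [Fintype W] [DecidableEq W] [AddCommMonoid M]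
    (G : SimpleGraph W) [DecidableRel G.Adj] (u : W) (f : W → M) :
    ∑ d ∈ ({d : G.Dart | d.fst = u} : Finset _), f d.snd = ∑ v ∈ G.neighborFinset u, f v := by
  refine Finset.sum_bij (fun d _ => d.snd) (fun d hd => ?_) (fun d hd d' hd' h => ?_)
    (fun v hv => ?_) (fun _ _ => rfl)
  · simp only [Finset.mem_filter, Finset.mem_univ, true_and] at hd
    rw [← hd, mem_neighborFinset]
    exact d.adj
  · simp only [Finset.mem_filter, Finset.mem_univ, true_and] at hd hd'
    exact Dart.ext _ _ (Prod.ext (hd.trans hd'.symm) h)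
  · exact ⟨⟨(u, v), (G.mem_neighborFinset u v).mp hv⟩, by simp⟩

def arcLift {W : Type*} (G : SimpleGraph W) (c : ℂ) (x : W → ℂ) : G.Dart → ℂ :=
  fun a => c * x a.snd - x a.fst

theorem arcLift_ne_zero {W : Type*} (G : SimpleGraph W) {x : W → ℂ} {c : ℂ} (hc : c ^ 2 ≠ 1)
    {u w : W} (hadj : G.Adj u w) (hxu : x u ≠ 0) : G.arcLift c x ≠ 0 := by
  intro h
  have huw := congrFun h ⟨(u, w), hadj⟩
  have hwu := congrFun h ⟨(w, u), hadj.symm⟩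
  simp only [arcLift, Pi.zero_apply] at huw hwu
  have : (c ^ 2 - 1) * x u = 0 := by linear_combination c * hwu + huw
  exact hxu ((mul_eq_zero.mp this).resolve_left (sub_ne_zero.mpr hc))

end SimpleGraph

open SimpleGraph

theorem degree_mul_transMat_mulVec_apply {W : Type*} [Fintype W] (G : SimpleGraph W)
    [DecidableRel G.Adj] (x : W → ℂ) (u : W) :
    (G.degree u : ℂ) * (transMat G *ᵥ x) u = ∑ v ∈ G.neighborFinset u, x v := by
  have hrow : (transMat G *ᵥ x) u = (∑ v ∈ G.neighborFinset u, x v) / G.degree u := by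
    simp only [mulVec, dotProduct, transMat, ite_mul, zero_mul, ← Finset.sum_filter,
      ← neighborFinset_eq_filter, Finset.sum_div]
    exact Finset.sum_congr rfl fun v _ => one_div_mul_eq_div _ _
  rcases eq_or_ne (G.degree u) 0 with hdeg | hdeg
  · rw [← card_neighborFinset_eq_degree, Finset.card_eq_zero] at hdeg
    rw [hrow, hdeg]
    simp
  · rw [hrow, mul_div_cancel₀ _ (Nat.cast_ne_zero.mpr hdeg)]

theorem transMat_mulVec_apply_of_forall_not_adj {W : Type*} [Fintype W] (G : SimpleGraph W)
    [DecidableRel G.Adj] (x : W → ℂ) {u : W} (hu : ∀ w, ¬G.Adj u w) :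
    (transMat G *ᵥ x) u = 0 := by
  simp [mulVec, dotProduct, transMat, hu]

theorem groverShift_mulVec_apply (G : SimpleGraph V) [DecidableRel G.Adj] (w : G.Dart → ℂ)
    (a : G.Dart) : (groverShift G *ᵥ w) a = w a.symm := by
  simp [groverShift, mulVec, dotProduct]

theorem groverCoin_mulVec_apply (G : SimpleGraph V) [DecidableRel G.Adj] (w : G.Dart → ℂ)
    (a : G.Dart) : (groverCoin G *ᵥ w) a =
      2 / G.degree a.fst * ∑ b ∈ ({b : G.Dart | b.fst = a.fst} : Finset _), w b - w a := by
  simp only [groverCoin, mulVec, dotProduct, sub_mul, Finset.sum_sub_distrib, ite_mul, zero_mul,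
    one_mul, Finset.sum_ite_eq, Finset.mem_univ, if_true, ← Finset.sum_filter, Finset.mul_sum,
    eq_comm (a := a.fst)]

theorem groverU_mulVec_apply (G : SimpleGraph V) [DecidableRel G.Adj] (w : G.Dart → ℂ)
    (a : G.Dart) : (groverU G *ᵥ w) a =
      2 / G.degree a.snd * ∑ b ∈ ({b : G.Dart | b.fst = a.snd} : Finset _), w b - w a.symm := by
  rw [groverU, ← mulVec_mulVec, groverShift_mulVec_apply, groverCoin_mulVec_apply]
  rfl

theorem groverU_mulVec_arcLift (G : SimpleGraph V) [DecidableRel G.Adj] {x : V → ℂ} {μ : ℝ}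
    {c : ℂ} (hx : transMat G *ᵥ x = (μ : ℂ) • x) (hquad : c ^ 2 - 2 * μ * c + 1 = 0) :
    groverU G *ᵥ G.arcLift c x = c • G.arcLift c x := by
  ext a
  set u := a.snd
  have hdeg : (G.degree u : ℂ) ≠ 0 :=
    Nat.cast_ne_zero.mpr ((G.degree_pos_iff_exists_adj u).mpr ⟨a.fst, a.symm.adj⟩).ne'
  have hsum : ∑ b ∈ ({b : G.Dart | b.fst = u} : Finset _), G.arcLift c x b
      = G.degree u * (c * μ * x u - x u) := by
    calc _ = ∑ b ∈ ({b : G.Dart | b.fst = u} : Finset _), (c * x b.snd - x u) :=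
          Finset.sum_congr rfl fun b hb => by rw [arcLift, (Finset.mem_filter.mp hb).2]
      _ = c * ∑ v ∈ G.neighborFinset u, x v - G.degree u * x u := by
          rw [Finset.sum_sub_distrib, ← Finset.mul_sum, sum_dart_fst_eq G u x,
            sum_dart_fst_eq G u fun _ => x u, Finset.sum_const, card_neighborFinset_eq_degree,
            nsmul_eq_mul]
      _ = _ := by
          rw [← degree_mul_transMat_mulVec_apply, hx, Pi.smul_apply, smul_eq_mul]; ring
  rw [groverU_mulVec_apply, hsum, Pi.smul_apply, smul_eq_mul]
  simp only [arcLift, Dart.symm_toProd, Prod.fst_swap, Prod.snd_swap]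
  rw [div_mul_eq_mul_div, mul_left_comm, mul_div_cancel_left₀ _ hdeg]
  linear_combination (-x u) * hquad

theorem isOfFinOrder_of_groverU_pow_eq_one (G : SimpleGraph V) [DecidableRel G.Adj] {k : ℕ}
    (hk : 0 < k) (hUk : groverU G ^ k = 1) {x : V → ℂ} {μ : ℝ} {c : ℂ} (hx0 : x ≠ 0)
    (hx : transMat G *ᵥ x = (μ : ℂ) • x) (hquad : c ^ 2 - 2 * μ * c + 1 = 0) :
    IsOfFinOrder c := by
  rw [isOfFinOrder_iff_pow_eq_one]
  obtain ⟨u, hu⟩ := Function.ne_iff.mp hx0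
  by_cases hc : c ^ 2 = 1
  · exact ⟨2, two_pos, hc⟩
  by_cases hisol : ∀ w, ¬G.Adj u w
  · have hμ : (μ : ℂ) = 0 := by
      have := congrFun hx u
      rw [transMat_mulVec_apply_of_forall_not_adj G x hisol, Pi.smul_apply, smul_eq_mul] at this
      exact (mul_eq_zero.mp this.symm).resolve_right hu
    exact ⟨4, four_pos, by linear_combination (c ^ 2 - 1) * hquad + 2 * c * (c ^ 2 - 1) * hμ⟩
  push Not at hisol
  obtain ⟨w, hw⟩ := hisol
  exact ⟨k, hk, pow_eq_one_of_mulVec_eq_smul hUk (G.arcLift_ne_zero hc hw hu)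
    (groverU_mulVec_arcLift G hx hquad)⟩

theorem grover_periodic_trans_eigenvalues_general (G : SimpleGraph V) [DecidableRel G.Adj]
    (hper : ∃ k : ℕ, 0 < k ∧ groverU G ^ k = 1) :
    ∀ μ : ℝ, (∃ x : V → ℂ, x ≠ 0 ∧ (transMat G).mulVec x = (μ : ℂ) • x) →
      ∃ q : ℚ, μ = Real.cos (2 * Real.pi * q) ∧ IsIntegral ℤ (2 * μ) := by
  obtain ⟨k, hk, hUk⟩ := hper
  rintro μ ⟨x, hx0, hx⟩
  obtain ⟨c, hquad⟩ : ∃ c : ℂ, c ^ 2 - 2 * μ * c + 1 = 0 := by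
    obtain ⟨s, hs⟩ := IsAlgClosed.exists_eq_mul_self ((μ : ℂ) ^ 2 - 1)
    exact ⟨μ + s, by linear_combination -hs⟩
  have hc := isOfFinOrder_of_groverU_pow_eq_one G hk hUk hx0 hx hquad
  obtain ⟨q, hq⟩ := exists_rat_re_eq_cos_of_isOfFinOrder hc
  have hμ : μ = Real.cos (2 * Real.pi * q) :=
    (re_eq_of_norm_eq_one_of_quadratic hc.norm_eq_one hquad).symm.trans hq
  refine ⟨q, hμ, ?_⟩
  rw [hμ, show 2 * Real.pi * q = ((2 * q : ℚ) : ℝ) * Real.pi by push_cast; ring]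
  exact Real.isIntegral_two_mul_cos_rat_mul_pi _

/-- If the Grover walk is periodic then every eigenvalue of the transition matrix `P`
is `cos (2π q)` for some rational `q`; in particular its double is an algebraic integer. -/
theorem grover_periodic_trans_eigenvalues (G : SimpleGraph V) [DecidableRel G.Adj]
    (hG : G.Connected) (hper : ∃ k : ℕ, 0 < k ∧ groverU G ^ k = 1) :
    ∀ μ : ℝ, (∃ x : V → ℂ, x ≠ 0 ∧ (transMat G).mulVec x = (μ : ℂ) • x) →
      ∃ q : ℚ, μ = Real.cos (2 * Real.pi * q) ∧ IsIntegral ℤ (2 * μ) :=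
  grover_periodic_trans_eigenvalues_general G hper
end

section
/- The Grover walk on the complete graph K_N is periodic if and only if N = 2 or N = 3. -/
open Matrix Complex

variable {V : Type*} [Fintype V] [DecidableEq V]

lemma dart_sum (N : ℕ) (f : Fin N × Fin N → ℂ) :
    ∑ b : (⊤ : SimpleGraph (Fin N)).Dart, f b.toProd
      = ∑ p : Fin N × Fin N, if p.1 ≠ p.2 then f p else 0 := by
  rw [← Finset.sum_filter]
  symm
  apply Finset.sum_bij' (fun p hp => SimpleGraph.Dart.mk p (by simpa using hp))
    (fun (b : (⊤ : SimpleGraph (Fin N)).Dart) _ => b.toProd)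
  all_goals first
    | (intro a ha; rfl)
    | (intro b _; simp only [Finset.mem_filter, Finset.mem_univ, true_and]; exact b.adj)
    | (intro a ha; exact Finset.mem_univ _)

section eigen
variable (N : ℕ) (t : ℂ) (x y : Fin N)

/-- the eigenvector candidate -/
noncomputable def phiV : Fin N → ℂ := fun v => (if v = x then 1 else 0) - (if v = y then 1 else 0)

noncomputable def psiV : (⊤ : SimpleGraph (Fin N)).Dart → ℂ :=
  fun b => phiV N x y b.toProd.2 + t * phiV N x y b.toProd.1

lemma sum_phiV (hxy : x ≠ y) : ∑ v : Fin N, phiV N x y v = 0 := by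
  simp [phiV, Finset.sum_sub_distrib, Finset.sum_ite_eq']

lemma shift_mulVec (f : (⊤ : SimpleGraph (Fin N)).Dart → ℂ) (a : (⊤ : SimpleGraph (Fin N)).Dart) :
    (groverShift ⊤).mulVec f a = f a.symm := by
  simp [groverShift, Matrix.mulVec, dotProduct]

lemma coin_mulVec (hN : 2 ≤ N) (hxy : x ≠ y) (b0 : (⊤ : SimpleGraph (Fin N)).Dart) :
    (groverCoin ⊤).mulVec (psiV N t x y) b0
      = (2 / ((N : ℂ) - 1)) * ((((N:ℂ)-1) * t - 1) * phiV N x y b0.toProd.1)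
        - psiV N t x y b0 := by
  set c : ℂ := 2 / ((N : ℂ) - 1) with hc
  have hcast : ((N - 1 : ℕ) : ℂ) = (N : ℂ) - 1 := by
    rw [Nat.cast_sub (by omega), Nat.cast_one]
  have expand : (groverCoin (⊤ : SimpleGraph (Fin N))).mulVec (psiV N t x y) b0
      = (∑ b : (⊤ : SimpleGraph (Fin N)).Dart,
          (if b0.toProd.1 = b.toProd.1 then c * psiV N t x y b else 0)) - psiV N t x y b0 := by
    simp only [groverCoin, Matrix.mulVec, dotProduct, sub_mul, Finset.sum_sub_distrib]
    congr 1
    · apply Finset.sum_congr rfl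
      intro b _
      by_cases h : b0.toProd.1 = b.toProd.1 <;>
        simp [h, hc, SimpleGraph.complete_graph_degree, hcast]
    · simp [Finset.sum_ite_eq]
  rw [expand]
  congr 1
  have := dart_sum N (fun p => if b0.toProd.1 = p.1 then c * (phiV N x y p.2 + t * phiV N x y p.1) else 0)
  rw [show (∑ b : (⊤ : SimpleGraph (Fin N)).Dart,
        (if b0.toProd.1 = b.toProd.1 then c * psiV N t x y b else 0))
      = ∑ b : (⊤ : SimpleGraph (Fin N)).Dart,
        (fun p => if b0.toProd.1 = p.1 then c * (phiV N x y p.2 + t * phiV N x y p.1) else 0) b.toProd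
    from rfl, this]
  set u := b0.toProd.1
  rw [Fintype.sum_prod_type]
  rw [show (∑ v : Fin N, ∑ w : Fin N,
        if (v, w).1 ≠ (v, w).2 then (if u = (v,w).1 then c * (phiV N x y (v,w).2 + t * phiV N x y (v,w).1) else 0) else 0)
      = ∑ v : Fin N, if v = u then (∑ w : Fin N, if v ≠ w then c * (phiV N x y w + t * phiV N x y v) else 0) else 0 by
    apply Finset.sum_congr rfl
    intro v _
    by_cases h : v = u
    · simp [h]
    · have h' : u ≠ v := fun hh => h hh.symm
      simp [h, h']]
  rw [Finset.sum_ite_eq' Finset.univ u]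
  simp only [Finset.mem_univ, if_true]
  have split : ∀ w : Fin N, (if u ≠ w then c * (phiV N x y w + t * phiV N x y u) else 0)
      = c * (phiV N x y w + t * phiV N x y u) - (if u = w then c * (phiV N x y w + t * phiV N x y u) else 0) := by
    intro w; by_cases h : u = w <;> simp [h]
  rw [Finset.sum_congr rfl (fun w _ => split w), Finset.sum_sub_distrib,
    Finset.sum_ite_eq Finset.univ u]
  simp only [Finset.mem_univ, if_true]
  have hsum : ∑ w : Fin N, c * (phiV N x y w + t * phiV N x y u)
      = c * (∑ w : Fin N, phiV N x y w) + (N : ℂ) * (c * (t * phiV N x y u)) := by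
    simp only [mul_add, Finset.sum_add_distrib, ← Finset.mul_sum, Finset.sum_const,
      Finset.card_univ, Fintype.card_fin, nsmul_eq_mul]
    ring
  rw [hsum, sum_phiV N x y hxy]
  ring

lemma groverU_mulVec (hN : 2 ≤ N) (hxy : x ≠ y) (lam : ℂ)
    (hA : (2 / ((N:ℂ)-1)) * (((N:ℂ)-1)*t - 1) - t = lam)
    (hB : lam * t = -1) :
    (groverU (⊤ : SimpleGraph (Fin N))).mulVec (psiV N t x y) = lam • psiV N t x y := by
  funext a
  have h1 : (groverU (⊤ : SimpleGraph (Fin N))).mulVec (psiV N t x y) a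
      = (groverCoin ⊤).mulVec (psiV N t x y) a.symm := by
    rw [groverU, ← Matrix.mulVec_mulVec, shift_mulVec]
  rw [h1, coin_mulVec N t x y hN hxy]
  have hsymm1 : a.symm.toProd.1 = a.toProd.2 := rfl
  have hsymm2 : a.symm.toProd.2 = a.toProd.1 := rfl
  simp only [psiV, hsymm1, hsymm2, Pi.smul_apply, smul_eq_mul]
  linear_combination (phiV N x y a.toProd.2) * hA - (phiV N x y a.toProd.1) * hB

lemma groverU_pow_mulVec (hN : 2 ≤ N) (hxy : x ≠ y) (lam : ℂ)
    (hA : (2 / ((N:ℂ)-1)) * (((N:ℂ)-1)*t - 1) - t = lam)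
    (hB : lam * t = -1) (k : ℕ) :
    (groverU (⊤ : SimpleGraph (Fin N)) ^ k).mulVec (psiV N t x y)
      = lam ^ k • psiV N t x y := by
  induction k with
  | zero => simp [Matrix.one_mulVec]
  | succ k ih =>
      rw [pow_succ, ← Matrix.mulVec_mulVec, groverU_mulVec N t x y hN hxy lam hA hB,
        Matrix.mulVec_smul, ih, smul_smul, ← pow_succ']

end eigen

def intShift (N : ℕ) : Matrix (⊤ : SimpleGraph (Fin N)).Dart (⊤ : SimpleGraph (Fin N)).Dart ℤ :=
  fun a b => if b = a.symm then 1 else 0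

def intCoin (N : ℕ) (c : ℤ) : Matrix (⊤ : SimpleGraph (Fin N)).Dart (⊤ : SimpleGraph (Fin N)).Dart ℤ :=
  fun a b => (if a.toProd.1 = b.toProd.1 then c else 0) - (if a = b then 1 else 0)

def intW (N : ℕ) (c : ℤ) := intShift N * intCoin N c

lemma groverU_eq_intW (N : ℕ) (c : ℤ) (hc : (2 : ℂ) / ((N - 1 : ℕ) : ℂ) = (c : ℂ)) :
    groverU (⊤ : SimpleGraph (Fin N)) = (intW N c).map (Int.cast) := by
  have h1 : groverShift (⊤ : SimpleGraph (Fin N)) = (intShift N).map (Int.cast) := by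
    ext a b
    simp [groverShift, intShift, Matrix.map_apply, apply_ite (Int.cast : ℤ → ℂ)]
  have h2 : groverCoin (⊤ : SimpleGraph (Fin N)) = (intCoin N c).map (Int.cast) := by
    ext a b
    simp [groverCoin, intCoin, Matrix.map_apply, apply_ite (Int.cast : ℤ → ℂ),
      SimpleGraph.complete_graph_degree, hc]
  rw [groverU, intW, h1, h2]; exact (Matrix.map_mul (f := Int.castRingHom ℂ)).symm

lemma pow_intW (N : ℕ) (c : ℤ) (k : ℕ) (hc : (2 : ℂ) / ((N - 1 : ℕ) : ℂ) = (c : ℂ))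
    (h : intW N c ^ k = 1) : groverU (⊤ : SimpleGraph (Fin N)) ^ k = 1 := by
  rw [groverU_eq_intW N c hc]
  have : (intW N c).map (Int.cast) = (Int.castRingHom ℂ).mapMatrix (intW N c) := rfl
  rw [this, ← map_pow, h, _root_.map_one]

lemma isIntegral_of_pow (lam : ℂ) (k : ℕ) (hk : k ≠ 0) (h : lam ^ k = 1) : IsIntegral ℤ lam :=
  ⟨Polynomial.X ^ k - Polynomial.C 1, Polynomial.monic_X_pow_sub_C 1 hk, by simp [h]⟩

/-- The Grover walk on the complete graph `K_N` is periodic iff `N = 2` or `N = 3`. -/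
theorem grover_complete_periodic (N : ℕ) (hN : 2 ≤ N) :
    (∃ k : ℕ, 0 < k ∧ groverU (⊤ : SimpleGraph (Fin N)) ^ k = 1) ↔ N = 2 ∨ N = 3 := by
  constructor
  · rintro ⟨k, hk, hUk⟩
    by_contra hcon
    push_neg at hcon
    have hN4 : 4 ≤ N := by omega
    have hdR : (3 : ℝ) ≤ (N : ℝ) - 1 := by
      have : (4 : ℝ) ≤ (N : ℝ) := by exact_mod_cast hN4
      linarith
    set d : ℝ := (N : ℝ) - 1 with hd
    have hd0 : 0 < d := by linarith
    set μ : ℝ := -1 / d with hμ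
    have hμ2 : μ ^ 2 < 1 := by
      rw [hμ, div_pow, neg_one_sq]
      rw [div_lt_one (by positivity)]
      nlinarith
    set s : ℝ := Real.sqrt (1 - μ ^ 2) with hsdef
    have hs : 0 < s := Real.sqrt_pos.mpr (by linarith)
    have hs2 : s ^ 2 = 1 - μ ^ 2 := Real.sq_sqrt (by linarith)
    set lam : ℂ := (μ : ℂ) + (s : ℂ) * I with hlam
    have him : lam.im = s := by simp [hlam]
    have hlam0 : lam ≠ 0 := by
      intro h; rw [h] at him; simp at him; linarith
    have hlamne : lam ≠ -1 := by
      intro h; rw [h] at him; simp at him; linarith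
    have key : ((s : ℝ) : ℂ) ^ 2 = 1 - ((μ : ℝ) : ℂ) ^ 2 := by exact_mod_cast hs2
    have hquad : lam ^ 2 - 2 * (μ : ℂ) * lam + 1 = 0 := by
      rw [hlam]
      linear_combination (s : ℂ) ^ 2 * Complex.I_sq - key
    set t : ℂ := -lam⁻¹ with ht
    have hB : lam * t = -1 := by
      rw [ht, mul_neg, mul_inv_cancel₀ hlam0]
    have hNC : ((N : ℂ) - 1) ≠ 0 := by
      intro h
      have h1 : (N : ℂ) = 1 := by linear_combination h
      have : N = 1 := by exact_mod_cast h1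
      omega
    have hμC : ((μ : ℝ) : ℂ) = -1 / ((N : ℂ) - 1) := by
      rw [hμ, hd]
      push_cast
      ring
    have hA : (2 / ((N : ℂ) - 1)) * (((N : ℂ) - 1) * t - 1) - t = lam := by
      have hL : (2 / ((N : ℂ) - 1)) * (((N : ℂ) - 1) * t - 1) - t
          = t - 2 / ((N : ℂ) - 1) := by
        field_simp
        ring
      have hinv : lam⁻¹ = 2 * ((μ : ℝ) : ℂ) - lam :=
        inv_eq_of_mul_eq_one_right (by linear_combination -hquad)
      rw [hL, ht, hinv, hμC]
      ring
    set x : Fin N := ⟨0, by omega⟩ with hx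
    set y : Fin N := ⟨1, by omega⟩ with hy
    have hxy : x ≠ y := by
      intro h
      have := congrArg Fin.val h
      simp [hx, hy] at this
    have hpow := groverU_pow_mulVec N t x y hN hxy lam hA hB k
    rw [hUk, Matrix.one_mulVec] at hpow
    set a0 : (⊤ : SimpleGraph (Fin N)).Dart := ⟨(x, y), by simpa using hxy⟩ with ha0
    have hval : psiV N t x y a0 = t - 1 := by
      simp [psiV, phiV, ha0, hxy, Ne.symm hxy]
      ring
    have heval := congrFun hpow a0
    rw [Pi.smul_apply, smul_eq_mul, hval] at heval
    have ht1 : t - 1 ≠ 0 := by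
      intro h
      have : t = 1 := by linear_combination h
      rw [ht] at this
      have : lam⁻¹ = -1 := by linear_combination -this
      have : lam = -1 := by
        rw [← inv_inv lam, this]
        norm_num
      exact hlamne this
    have hroot : lam ^ k = 1 := by
      have h0 : (lam ^ k - 1) * (t - 1) = 0 := by linear_combination -heval
      rcases mul_eq_zero.mp h0 with h | h
      · linear_combination h
      · exact absurd h ht1
    have hrootinv : (lam⁻¹) ^ k = 1 := by
      rw [inv_pow, hroot, inv_one]
    have hint1 : IsIntegral ℤ lam := isIntegral_of_pow lam k hk.ne' hroot
    have hint2 : IsIntegral ℤ lam⁻¹ := isIntegral_of_pow lam⁻¹ k hk.ne' hrootinv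
    have hint : IsIntegral ℤ (lam + lam⁻¹) := hint1.add hint2
    have hsum : lam + lam⁻¹ = -2 / ((N : ℂ) - 1) := by
      have hinv : lam⁻¹ = 2 * ((μ : ℝ) : ℂ) - lam :=
        inv_eq_of_mul_eq_one_right (by linear_combination -hquad)
      rw [hinv, hμC]
      ring
    have hq : ((-2 / ((N : ℚ) - 1) : ℚ) : ℂ) = -2 / ((N : ℂ) - 1) := by
      push_cast
      ring
    rw [hsum, ← hq] at hint
    have : algebraMap ℚ ℂ (-2 / ((N : ℚ) - 1)) = ((-2 / ((N : ℚ) - 1) : ℚ) : ℂ) :=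
      eq_ratCast _ _
    rw [← this] at hint
    have hintQ : IsIntegral ℤ (-2 / ((N : ℚ) - 1)) :=
      (isIntegral_algebraMap_iff (algebraMap ℚ ℂ).injective).mp hint
    obtain ⟨n, hn⟩ := IsIntegrallyClosed.isIntegral_iff.mp hintQ
    have hnq : (n : ℚ) = -2 / ((N : ℚ) - 1) := hn
    have hdQ : (3 : ℚ) ≤ (N : ℚ) - 1 := by
      have : (4 : ℚ) ≤ (N : ℚ) := by exact_mod_cast hN4
      linarith
    have h1 : (n : ℚ) < 0 := by
      rw [hnq]
      apply div_neg_of_neg_of_pos <;> linarith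
    have h2 : (-1 : ℚ) < (n : ℚ) := by
      rw [hnq, neg_div]
      rw [neg_lt_neg_iff, div_lt_one (by linarith)]
      linarith
    have h1' : n < 0 := by exact_mod_cast h1
    have h2' : (-1 : ℤ) < n := by exact_mod_cast h2
    omega
  · rintro (rfl | rfl)
    · exact ⟨2, by norm_num, pow_intW 2 2 2 (by norm_num) (by decide)⟩
    · exact ⟨3, by norm_num, pow_intW 3 1 3 (by norm_num) (by decide)⟩
end

section
/- If the Grover walk on a finite connected k-regular graph G is periodic with period T, then every eigenvalue of the adjacency matrix of G is of the form k·cos(2πj/T) for some integer j; consequently, all adjacency eigenvalues of G lie in the set {k·cos(2πj/T) : 0 ≤ j < T}. -/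
open Matrix Complex

variable {V : Type*} [Fintype V] [DecidableEq V]

section Aux

lemma sum_dart_fiber (G : SimpleGraph V) [DecidableRel G.Adj] (v : V) (h : V → ℂ) :
    (∑ b : G.Dart, if b.toProd.1 = v then h b.toProd.2 else 0)
      = ∑ w ∈ G.neighborFinset v, h w := by
  rw [← Finset.sum_filter]
  refine Finset.sum_bij' (fun b _ => b.toProd.2)
    (fun w hw => SimpleGraph.Dart.mk (v, w) ((SimpleGraph.mem_neighborFinset G v w).mp hw))
    ?_ ?_ ?_ ?_ ?_
  · intro b hb
    simp only [Finset.mem_filter, Finset.mem_univ, true_and] at hb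
    rw [SimpleGraph.mem_neighborFinset]
    exact hb ▸ b.adj
  · intro w hw
    simp
  · intro b hb
    simp only [Finset.mem_filter, Finset.mem_univ, true_and] at hb
    ext <;> simp [← hb]
  · intro w hw
    rfl
  · intro b hb; rfl

lemma sum_darts (G : SimpleGraph V) [DecidableRel G.Adj] (g h : V → ℂ) :
    (∑ a : G.Dart, g a.toProd.1 * h a.toProd.2)
      = ∑ v, g v * ∑ w ∈ G.neighborFinset v, h w := by
  have e1 : ∀ a : G.Dart, g a.toProd.1 * h a.toProd.2
      = ∑ v, if a.toProd.1 = v then g v * h a.toProd.2 else 0 := by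
    intro a
    rw [Finset.sum_ite_eq Finset.univ a.toProd.1 (fun v => g v * h a.toProd.2),
      if_pos (Finset.mem_univ _)]
  calc (∑ a : G.Dart, g a.toProd.1 * h a.toProd.2)
      = ∑ a : G.Dart, ∑ v, if a.toProd.1 = v then g v * h a.toProd.2 else 0 := by
        simp_rw [← e1]
    _ = ∑ v, ∑ a : G.Dart, if a.toProd.1 = v then g v * h a.toProd.2 else 0 :=
        Finset.sum_comm
    _ = ∑ v, g v * ∑ w ∈ G.neighborFinset v, h w := by
        refine Finset.sum_congr rfl fun v _ => ?_
        rw [Finset.mul_sum, ← sum_dart_fiber G v (fun w => g v * h w)]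

omit [DecidableEq V] in
lemma sum_darts_symm (G : SimpleGraph V) [DecidableRel G.Adj] (f : G.Dart → ℂ) :
    (∑ a : G.Dart, f a.symm) = ∑ a : G.Dart, f a :=
  Fintype.sum_bijective _ (SimpleGraph.Dart.symm_involutive (G := G)).bijective _ _ (fun _ => rfl)

lemma shift_mulVec_s9 (G : SimpleGraph V) [DecidableRel G.Adj] (f : G.Dart → ℂ) :
    (groverShift G).mulVec f = fun a => f a.symm := by
  funext a
  simp only [groverShift, mulVec, dotProduct, ite_mul, one_mul, zero_mul]
  rw [Finset.sum_ite_eq' Finset.univ a.symm f, if_pos (Finset.mem_univ _)]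

lemma coin_mulVec_psi (G : SimpleGraph V) [DecidableRel G.Adj] {k : ℕ}
    (hreg : G.IsRegularOfDegree k) (x : V → ℂ) (lam : ℂ)
    (hx : ∀ v, ∑ w ∈ G.neighborFinset v, x w = lam * x v) :
    (groverCoin G).mulVec (fun a => x a.toProd.2)
      = fun a => 2 * lam / k * x a.toProd.1 - x a.toProd.2 := by
  funext a
  simp only [groverCoin, mulVec, dotProduct, sub_mul, ite_mul, one_mul, zero_mul,
    Finset.sum_sub_distrib]
  rw [Finset.sum_ite_eq Finset.univ a (fun b => x b.toProd.2), if_pos (Finset.mem_univ _)]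
  congr 1
  have : ∀ b : G.Dart,
      (if a.toProd.1 = b.toProd.1 then (2:ℂ) / (G.degree a.toProd.1) * x b.toProd.2 else 0)
        = (2:ℂ) / k * (if b.toProd.1 = a.toProd.1 then x b.toProd.2 else 0) := by
    intro b
    rcases eq_or_ne a.toProd.1 b.toProd.1 with h | h
    · rw [if_pos h, if_pos h.symm, hreg a.toProd.1]
    · rw [if_neg h, if_neg (Ne.symm h), mul_zero]
  simp_rw [this, ← Finset.mul_sum, sum_dart_fiber G a.toProd.1 x, hx]
  ring

lemma coin_mulVec_chi (G : SimpleGraph V) [DecidableRel G.Adj] {k : ℕ} (hk : (k:ℂ) ≠ 0)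
    (hreg : G.IsRegularOfDegree k) (x : V → ℂ) :
    (groverCoin G).mulVec (fun a => x a.toProd.1)
      = fun a => x a.toProd.1 := by
  funext a
  simp only [groverCoin, mulVec, dotProduct, sub_mul, ite_mul, one_mul, zero_mul,
    Finset.sum_sub_distrib]
  rw [Finset.sum_ite_eq Finset.univ a (fun b => x b.toProd.1), if_pos (Finset.mem_univ _)]
  have : ∀ b : G.Dart,
      (if a.toProd.1 = b.toProd.1 then (2:ℂ) / (G.degree a.toProd.1) * x b.toProd.1 else 0)
        = (2:ℂ) / k * (if b.toProd.1 = a.toProd.1 then x a.toProd.1 else 0) := by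
    intro b
    rcases eq_or_ne a.toProd.1 b.toProd.1 with h | h
    · rw [if_pos h, if_pos h.symm, hreg a.toProd.1, ← h]
    · rw [if_neg h, if_neg (Ne.symm h), mul_zero]
  simp_rw [this, ← Finset.mul_sum, sum_dart_fiber G a.toProd.1 (fun _ => x a.toProd.1)]
  rw [Finset.sum_const, SimpleGraph.card_neighborFinset_eq_degree, hreg a.toProd.1, nsmul_eq_mul]
  field_simp
  ring

end Aux

/-- If the Grover walk on a connected `k`-regular graph is periodic with period `T`, then
every adjacency eigenvalue is of the form `k * cos (2πj/T)` for some `0 ≤ j < T`. -/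
theorem grover_periodic_regular_adj_eigenvalues (G : SimpleGraph V) [DecidableRel G.Adj]
    (hG : G.Connected) (k T : ℕ) (hreg : G.IsRegularOfDegree k)
    (hT : IsLeast {t : ℕ | 0 < t ∧ groverU G ^ t = 1} T) :
    ∀ lam : ℝ, (∃ x : V → ℝ, x ≠ 0 ∧ (G.adjMatrix ℝ).mulVec x = lam • x) →
      ∃ j : ℕ, j < T ∧ lam = k * Real.cos (2 * Real.pi * j / T) := by
  rintro lam ⟨x, hx0, hx⟩
  obtain ⟨⟨hTpos, hTU⟩, -⟩ := hT
  have hxv : ∀ v, ∑ w ∈ G.neighborFinset v, x w = lam * x v := by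
    intro v
    have := congrFun hx v
    simpa [SimpleGraph.adjMatrix_mulVec_apply] using this
  obtain ⟨v0, hv0⟩ : ∃ v, x v ≠ 0 := by
    by_contra h; push_neg at h; exact hx0 (funext h)
  rcases Nat.eq_zero_or_pos k with hk0 | hkpos
  · subst hk0
    have hN : G.neighborFinset v0 = ∅ := Finset.card_eq_zero.mp
      (by rw [SimpleGraph.card_neighborFinset_eq_degree]; exact hreg v0)
    have h0 : lam * x v0 = 0 := by rw [← hxv v0, hN, Finset.sum_empty]
    have hlam : lam = 0 := by
      rcases mul_eq_zero.mp h0 with h | h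
      · exact h
      · exact absurd h hv0
    exact ⟨0, hTpos, by simp [hlam]⟩
  -- main case k > 0
  have hkR : (0:ℝ) < k := by exact_mod_cast hkpos
  have hkC : (k:ℂ) ≠ 0 := by exact_mod_cast hkR.ne'
  -- eigenvalue bound |lam| ≤ k
  obtain ⟨v1, -, hmax⟩ := Finset.exists_max_image Finset.univ (fun v => |x v|)
    ⟨v0, Finset.mem_univ v0⟩
  have hxv1 : 0 < |x v1| := lt_of_lt_of_le (abs_pos.mpr hv0) (hmax v0 (Finset.mem_univ v0))
  have hbound : |lam| ≤ (k:ℝ) := by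
    have hkey : |lam| * |x v1| ≤ (k:ℝ) * |x v1| := by
      calc |lam| * |x v1| = |lam * x v1| := (abs_mul _ _).symm
        _ = |∑ w ∈ G.neighborFinset v1, x w| := by rw [hxv]
        _ ≤ ∑ w ∈ G.neighborFinset v1, |x w| := Finset.abs_sum_le_sum_abs _ _
        _ ≤ ∑ _w ∈ G.neighborFinset v1, |x v1| :=
            Finset.sum_le_sum fun w _ => hmax w (Finset.mem_univ w)
        _ = (k:ℝ) * |x v1| := by
            rw [Finset.sum_const, SimpleGraph.card_neighborFinset_eq_degree, hreg v1,
              nsmul_eq_mul]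
    exact le_of_mul_le_mul_right hkey hxv1
  have hm1 : -1 ≤ lam / k := by
    rw [le_div_iff₀ hkR]
    have := (abs_le.mp hbound).1
    linarith
  have hm2 : lam / k ≤ 1 := by
    rw [div_le_one hkR]
    exact (abs_le.mp hbound).2
  set θ : ℝ := Real.arccos (lam / k) with hθdef
  have hcos : Real.cos θ = lam / k := Real.cos_arccos hm1 hm2
  -- complex eigen equation
  have hxC : ∀ v, ∑ w ∈ G.neighborFinset v, ((x w : ℝ) : ℂ) = (lam:ℂ) * (x v : ℝ) := by
    intro v
    have h1 := congrArg (fun r : ℝ => (r : ℂ)) (hxv v)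
    push_cast at h1
    exact h1
  -- the two vectors on darts
  set ψ : G.Dart → ℂ := fun a => ((x a.toProd.2 : ℝ) : ℂ) with hψdef
  set χ : G.Dart → ℂ := fun a => ((x a.toProd.1 : ℝ) : ℂ) with hχdef
  set c2 : ℂ := 2 * (lam:ℂ) / k with hc2def
  have hUψ : (groverU G).mulVec ψ = c2 • ψ - χ := by
    rw [hψdef, hχdef, groverU, ← mulVec_mulVec, coin_mulVec_psi G hreg _ _ hxC, shift_mulVec_s9]
    funext a
    simp [c2, SimpleGraph.Dart.symm_toProd]
  have hUχ : (groverU G).mulVec χ = ψ := by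
    rw [hψdef, hχdef, groverU, ← mulVec_mulVec, coin_mulVec_chi G hkC hreg (fun v => ((x v:ℝ):ℂ)), shift_mulVec_s9]
    funext a
    simp [SimpleGraph.Dart.symm_toProd]
  -- the recurrence for iterates
  have hrec : ∀ n : ℕ, (groverU G ^ (n+2)).mulVec ψ
      = c2 • (groverU G ^ (n+1)).mulVec ψ - (groverU G ^ n).mulVec ψ := by
    intro n
    have e2 : groverU G ^ (n+2) = groverU G ^ (n+1) * groverU G := by rw [pow_succ]
    have e1 : groverU G ^ (n+1) = groverU G ^ n * groverU G := by rw [pow_succ]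
    rw [e2, ← mulVec_mulVec, hUψ, mulVec_sub, mulVec_smul, e1,
      ← mulVec_mulVec χ (groverU G ^ n) (groverU G), hUχ]
  -- scalar sequence
  set s : ℕ → ℂ := fun n => ∑ a : G.Dart, ψ a * ((groverU G ^ n).mulVec ψ) a with hsdef
  set c0 : ℝ := ∑ v, (x v)^2 with hc0def
  have hc0pos : 0 < c0 := by
    apply Finset.sum_pos' (fun v _ => sq_nonneg _)
    exact ⟨v0, Finset.mem_univ v0, by positivity⟩
  set C0 : ℂ := (k:ℂ) * ((c0:ℝ):ℂ) with hC0def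
  have hC0ne : C0 ≠ 0 := by
    apply mul_ne_zero hkC
    exact_mod_cast hc0pos.ne'
  -- sums of products over darts
  have hsum2 : (∑ a : G.Dart, ψ a * ψ a) = C0 := by
    have flip : (∑ a : G.Dart, ψ a * ψ a) = ∑ a : G.Dart, χ a * χ a := by
      rw [← sum_darts_symm G (fun a => ψ a * ψ a)]
      refine Finset.sum_congr rfl fun a _ => ?_
      simp [ψ, χ, SimpleGraph.Dart.symm_toProd]
    have hsd := sum_darts G (fun v => ((x v:ℝ):ℂ) * ((x v:ℝ):ℂ)) (fun _ => (1:ℂ))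
    beta_reduce at hsd
    simp only [mul_one] at hsd
    rw [flip, hχdef]
    rw [hsd]
    have hone : ∀ v : V, (∑ w ∈ G.neighborFinset v, (1:ℂ)) = (k:ℂ) := by
      intro v
      rw [Finset.sum_const, SimpleGraph.card_neighborFinset_eq_degree, hreg v, nsmul_eq_mul,
        mul_one]
    simp_rw [hone]
    rw [hC0def, hc0def]
    push_cast
    rw [Finset.mul_sum]
    refine Finset.sum_congr rfl fun v _ => ?_
    ring
  have hsum1 : (∑ a : G.Dart, ψ a * χ a) = (lam:ℂ) * ((c0:ℝ):ℂ) := by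
    have flip : (∑ a : G.Dart, ψ a * χ a) = ∑ a : G.Dart, χ a * ψ a := by
      rw [← sum_darts_symm G (fun a => ψ a * χ a)]
      refine Finset.sum_congr rfl fun a _ => ?_
      simp [ψ, χ, SimpleGraph.Dart.symm_toProd, mul_comm]
    have hsd := sum_darts G (fun v => ((x v:ℝ):ℂ)) (fun w => ((x w:ℝ):ℂ))
    beta_reduce at hsd
    rw [flip, hχdef, hψdef]
    rw [hsd]
    simp_rw [hxC]
    rw [hc0def]
    push_cast
    rw [Finset.mul_sum]
    refine Finset.sum_congr rfl fun v _ => ?_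
    ring
  -- base cases
  have base0 : s 0 = C0 := by
    rw [hsdef]
    simp only [pow_zero, one_mulVec]
    exact hsum2
  have base1 : s 1 = (lam:ℂ) * ((c0:ℝ):ℂ) := by
    rw [hsdef]
    simp only [pow_one, hUψ]
    have : (∑ a : G.Dart, ψ a * (c2 • ψ - χ) a)
        = c2 * (∑ a : G.Dart, ψ a * ψ a) - ∑ a : G.Dart, ψ a * χ a := by
      rw [Finset.mul_sum, ← Finset.sum_sub_distrib]
      refine Finset.sum_congr rfl fun a _ => ?_
      simp [Pi.sub_apply, Pi.smul_apply, smul_eq_mul]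
      ring
    rw [this, hsum2, hsum1, hC0def, hc2def]
    field_simp
    ring
  -- the closed form by two-step induction
  have key : ∀ n : ℕ, s n = ((Real.cos (n * θ) : ℝ) : ℂ) * C0
      ∧ s (n+1) = ((Real.cos ((n+1) * θ) : ℝ) : ℂ) * C0 := by
    intro n
    induction n with
    | zero =>
      constructor
      · rw [base0]; norm_num
      · rw [base1]
        rw [show ((0:ℕ):ℝ) + 1 = 1 by norm_num, one_mul, hcos, hC0def]
        push_cast
        field_simp
    | succ n ih =>
      constructor
      · rw [ih.2]; norm_cast
      have hstep : s (n+2) = c2 * s (n+1) - s n := by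
        rw [hsdef]
        simp only [hrec n]
        rw [Finset.mul_sum, ← Finset.sum_sub_distrib]
        refine Finset.sum_congr rfl fun a _ => ?_
        simp [Pi.sub_apply, Pi.smul_apply, smul_eq_mul]
        ring
      have trig : Real.cos (((n:ℝ)+2) * θ) = 2 * (lam/k) * Real.cos (((n:ℝ)+1) * θ)
          - Real.cos ((n:ℝ) * θ) := by
        have hiden : Real.cos (((n:ℝ)+2)*θ) + Real.cos ((n:ℝ)*θ)
            = 2 * Real.cos (((n:ℝ)+1)*θ) * Real.cos θ := by
          rw [show ((n:ℝ)+2)*θ = ((n:ℝ)+1)*θ + θ by ring,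
            show (n:ℝ)*θ = ((n:ℝ)+1)*θ - θ by ring, Real.cos_add, Real.cos_sub]
          ring
        rw [hcos] at hiden
        linarith
      have hn2 : ((n+1:ℕ):ℝ) + 1 = (n:ℝ) + 2 := by push_cast; ring
      rw [hstep, ih.1, ih.2, hn2, trig, hc2def]
      push_cast
      field_simp
  -- periodicity gives cos (T θ) = 1
  have hsT : s T = s 0 := by
    rw [hsdef]
    simp only [hTU, pow_zero, one_mulVec]
  have hcosT : Real.cos (T * θ) = 1 := by
    have h1 : ((Real.cos (T * θ) : ℝ) : ℂ) * C0 = 1 * C0 := by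
      rw [← (key T).1, hsT, base0, one_mul]
    have h2 : ((Real.cos (T * θ) : ℝ) : ℂ) = 1 := mul_right_cancel₀ hC0ne h1
    exact_mod_cast h2
  obtain ⟨n, hn⟩ := (Real.cos_eq_one_iff _).mp hcosT
  have hθ0 : 0 ≤ θ := Real.arccos_nonneg _
  have hθπ : θ ≤ Real.pi := Real.arccos_le_pi _
  have hπpos := Real.pi_pos
  have hTR : (0:ℝ) < T := by exact_mod_cast hTpos
  have hn0 : 0 ≤ n := by
    by_contra h
    push_neg at h
    have : (n:ℝ) * (2 * Real.pi) < 0 := by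
      apply mul_neg_of_neg_of_pos
      · exact_mod_cast h
      · linarith
    have : (0:ℝ) ≤ (T:ℝ) * θ := by positivity
    linarith [hn]
  have hnT : n < (T:ℤ) := by
    by_contra h
    push_neg at h
    have h1 : (T:ℝ) ≤ (n:ℝ) := by exact_mod_cast h
    have h2 : (T:ℝ) * θ ≤ (T:ℝ) * Real.pi := by
      apply mul_le_mul_of_nonneg_left hθπ hTR.le
    have h3 : (T:ℝ) * (2 * Real.pi) ≤ (n:ℝ) * (2 * Real.pi) := by
      apply mul_le_mul_of_nonneg_right h1
      linarith
    nlinarith [hn]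
  refine ⟨n.toNat, ?_, ?_⟩
  · have h1 : (n.toNat : ℤ) < (T:ℤ) := by rwa [Int.toNat_of_nonneg hn0]
    exact_mod_cast h1
  · have hjn : ((n.toNat : ℕ) : ℝ) = ((n:ℤ):ℝ) := by
      exact_mod_cast congrArg (fun m : ℤ => (m:ℝ)) (Int.toNat_of_nonneg hn0)
    have hθval : θ = 2 * Real.pi * ((n.toNat : ℕ):ℝ) / T := by
      rw [hjn]
      field_simp
      nlinarith [hn]
    rw [← hθval, hcos]
    field_simp
end
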